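/- Let I be a saturated graded two-sided ideal of F̄ with C ⊆ I, and let J = ⟨ῑ(I)⟩_ℕ ⊆ P̄ be its letterplace analogue (so D ⊆ J). Then J is an L-saturated letterplace ideal. -/

import Mathlib

noncomputable section

/-! ### Common definitions for the letterplace correspondence (La Scala)

`FA K Y` is the free associative algebra `K⟨Y⟩` (monoid algebra of the free monoid on `Y`);
`PL K Y` is the letterplace polynomial algebra `K[y(j) : y ∈ Y, j ∈ ℕ*]`.
The algebra `F̄ = K⟨X ∪ {t}⟩` is modeled as `FA K (Option X)` with `t = none`,
and similarly `P̄ = PL K (Option X)`. -/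

/-- The free associative algebra `K⟨Y⟩`. -/
abbrev FA (K : Type*) [CommSemiring K] (Y : Type*) := MonoidAlgebra K (FreeMonoid Y)

/-- The letterplace polynomial algebra `K[y(j)]`, with places in `ℕ* = ℕ+`. -/
abbrev PL (K : Type*) [CommSemiring K] (Y : Type*) := MvPolynomial (Y × ℕ+) K

variable (K : Type*) [Field K]

/-- The generator of `K⟨Y⟩` corresponding to a letter. -/
def gen {Y : Type*} (y : Y) : FA K Y := MonoidAlgebra.of K (FreeMonoid Y) (FreeMonoid.of y)

/-- The extra letter `t` of `F̄ = K⟨X ∪ {t}⟩`. -/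
def tv {X : Type*} : FA K (Option X) := gen K (none : Option X)

/-- `φ : F̄ → F̄`, the algebra endomorphism with `φ(x_i) = x_i`, `φ(t) = 1`. -/
def phi {X : Type*} : FA K (Option X) →ₐ[K] FA K (Option X) :=
  (MonoidAlgebra.lift K (FA K (Option X)) (FreeMonoid (Option X)))
    (FreeMonoid.lift fun o => Option.elim o 1 (fun x => gen K (some x)))

/-- `f` is homogeneous of degree `d` (all words in its support have length `d`). -/
def IsHomog {Y : Type*} (d : ℕ) (f : FA K Y) : Prop :=
  ∀ w ∈ f.coeff.support, FreeMonoid.length w = d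

/-- The homogeneous component of degree `d` of `f ∈ K⟨Y⟩`. -/
def homComp {Y : Type*} (d : ℕ) (f : FA K Y) : FA K Y :=
  ∑ w ∈ f.coeff.support.filter (fun w => FreeMonoid.length w = d), MonoidAlgebra.single w (f.coeff w)

/-- A two-sided ideal is graded (for the grading by total degree) iff it contains all
homogeneous components of its elements. -/
def IsGradedF {Y : Type*} (I : TwoSidedIdeal (FA K Y)) : Prop := ∀ f ∈ I, ∀ d, homComp K d f ∈ I

/-- `C ⊆ F̄`: the two-sided ideal generated by all homogeneous elements of `ker φ`,
i.e. the largest graded ideal contained in `ker φ`. -/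
def Cideal {X : Type*} : TwoSidedIdeal (FA K (Option X)) :=
  TwoSidedIdeal.span {f | (∃ d, IsHomog K d f) ∧ phi K f = 0}

/-- The embedding of free monoids `X* → (X ∪ {t})*`. -/
def embWord {X : Type*} : FreeMonoid X →* FreeMonoid (Option X) := FreeMonoid.map some

/-- The canonical embedding `F = K⟨X⟩ → F̄ = K⟨X ∪ {t}⟩`. -/
def emb {X : Type*} : FA K X →ₐ[K] FA K (Option X) :=
  (MonoidAlgebra.lift K (FA K (Option X)) (FreeMonoid X))
    ((MonoidAlgebra.of K (FreeMonoid (Option X))).comp embWord)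

/-- The top degree `deg(f)` of `f` (max length of a word in the support). -/
def degF {Y : Type*} (f : FA K Y) : ℕ := f.coeff.support.sup FreeMonoid.length

/-- The homogenization `f^* = Σ_k f_k t^{deg f − k} ∈ F̄` of `f ∈ F`. -/
def hstar {X : Type*} (f : FA K X) : FA K (Option X) :=
  ∑ w ∈ f.coeff.support,
    MonoidAlgebra.single
      (embWord w * (FreeMonoid.of (none : Option X)) ^ (degF K f - FreeMonoid.length w)) (f.coeff w)

/-- Homogenization of an element already written in `F̄` (used for elements of `φ(F̄) = F`). -/
def hstarO {X : Type*} (f : FA K (Option X)) : FA K (Option X) :=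
  ∑ w ∈ f.coeff.support,
    MonoidAlgebra.single
      (w * (FreeMonoid.of (none : Option X)) ^ (degF K f - FreeMonoid.length w)) (f.coeff w)

/-- The homogenization `I^*` of an ideal `I ⊆ F`: the two-sided ideal of `F̄` generated by all
homogeneous elements of `φ⁻¹(I)` (identifying `F` with its image in `F̄`). -/
def hstarIdeal {X : Type*} (I : TwoSidedIdeal (FA K X)) : TwoSidedIdeal (FA K (Option X)) :=
  TwoSidedIdeal.span {g | (∃ d, IsHomog K d g) ∧ ∃ f ∈ I, phi K g = emb K f}

/-- The saturation `Sat(J) = φ(J)^*` of a graded ideal `C ⊆ J ⊆ F̄`: the two-sided ideal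
generated by all homogeneous elements `g` with `φ(g) ∈ φ(J)`. -/
def SatF {X : Type*} (J : TwoSidedIdeal (FA K (Option X))) : TwoSidedIdeal (FA K (Option X)) :=
  TwoSidedIdeal.span {g | (∃ d, IsHomog K d g) ∧ ∃ h ∈ J, phi K g = phi K h}

/-! ### The commutative (letterplace) side -/

/-- The shift of letterplace variables: `k · y(j) = y(j + k)`. -/
def shiftVar {Y : Type*} (k : ℕ) (p : Y × ℕ+) : Y × ℕ+ :=
  (p.1, ⟨p.2 + k, Nat.add_pos_left p.2.2 k⟩)

/-- The action of `k ∈ ℕ` on the letterplace algebra. -/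
def shift {Y : Type*} (k : ℕ) : PL K Y →ₐ[K] PL K Y := MvPolynomial.rename (shiftVar k)

/-- An ideal of `PL K Y` is an ℕ-ideal if it is stable under all shifts. -/
def IsNIdeal {Y : Type*} (I : Ideal (PL K Y)) : Prop := ∀ k, ∀ f ∈ I, shift K k f ∈ I

/-- The ℕ-ideal `⟨S⟩_ℕ` generated by a set `S`. -/
def nspan {Y : Type*} (S : Set (PL K Y)) : Ideal (PL K Y) :=
  Ideal.span {g | ∃ k, ∃ f ∈ S, g = shift K k f}

/-- The place multidegree `∂(m)` of a monomial. -/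
def placeDeg {Y : Type*} (m : (Y × ℕ+) →₀ ℕ) : ℕ+ →₀ ℕ := Finsupp.mapDomain Prod.snd m

/-- `f` is multihomogeneous of place multidegree `μ`. -/
def IsMultiHomog {Y : Type*} (μ : ℕ+ →₀ ℕ) (f : PL K Y) : Prop :=
  ∀ m ∈ f.support, placeDeg m = μ

/-- The multihomogeneous component of multidegree `μ` of `f`. -/
def mComp {Y : Type*} (μ : ℕ+ →₀ ℕ) (f : PL K Y) : PL K Y :=
  ∑ m ∈ f.support.filter (fun m => placeDeg m = μ),
    MvPolynomial.monomial m (MvPolynomial.coeff m f)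

/-- An ideal is multigraded iff it contains all multihomogeneous components of its elements. -/
def IsMultiGraded {Y : Type*} (I : Ideal (PL K Y)) : Prop := ∀ f ∈ I, ∀ μ, mComp K μ f ∈ I

/-- `ψ : P̄ → P̄`, with `ψ(x_i(j)) = x_i(j)` and `ψ(t(j)) = 1`. -/
def psi {X : Type*} : PL K (Option X) →ₐ[K] PL K (Option X) :=
  MvPolynomial.aeval (fun p => Option.elim p.1 1 (fun x => MvPolynomial.X (some x, p.2)))

/-- The canonical embedding `P → P̄`. -/
def embP {X : Type*} : PL K X →ₐ[K] PL K (Option X) :=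
  MvPolynomial.rename (fun p => (some p.1, p.2))

/-- The top multidegree `∂(f)` of `f` (componentwise max over the support). -/
def topDeg {Y : Type*} (f : PL K Y) : ℕ+ →₀ ℕ := f.support.sup placeDeg

/-- The pure-`t` monomial `∏_k t(k)^{ν_k}` with exponents `ν`. -/
def tExp {X : Type*} (ν : ℕ+ →₀ ℕ) : ((Option X) × ℕ+) →₀ ℕ :=
  Finsupp.mapDomain (fun k => ((none : Option X), k)) ν

/-- The multihomogenization `f^* = Σ_μ f_μ ∏_k t(k)^{ν_k − μ_k} ∈ P̄` of `f ∈ P`. -/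
def mhstar {X : Type*} (f : PL K X) : PL K (Option X) :=
  ∑ m ∈ f.support,
    MvPolynomial.monomial
      (Finsupp.mapDomain (fun p => ((some p.1 : Option X), p.2)) m +
        tExp (topDeg K f - placeDeg m))
      (MvPolynomial.coeff m f)

/-- Multihomogenization of an element already written in `P̄` (used for elements of `ψ(P̄) = P`). -/
def mhstarO {X : Type*} (f : PL K (Option X)) : PL K (Option X) :=
  ∑ m ∈ f.support,
    MvPolynomial.monomial (m + tExp (topDeg K f - placeDeg m)) (MvPolynomial.coeff m f)

/-- The multihomogenization `I^*` of an ℕ-ideal `I ⊆ P`: the ℕ-ideal of `P̄` generated by all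
multihomogeneous elements of `ψ⁻¹(I)` (identifying `P` with its image in `P̄`). -/
def mhstarIdeal {X : Type*} (I : Ideal (PL K X)) : Ideal (PL K (Option X)) :=
  nspan K {g | (∃ μ, IsMultiHomog K μ g) ∧ ∃ f ∈ I, psi K g = embP K f}

/-- The saturation `Sat(J) = ψ(J)^*` of a multigraded ℕ-ideal `J ⊆ P̄`. -/
def SatP {X : Type*} (J : Ideal (PL K (Option X))) : Ideal (PL K (Option X)) :=
  nspan K {g | (∃ μ, IsMultiHomog K μ g) ∧ ∃ h ∈ J, psi K g = psi K h}

/-! ### The letterplace embedding -/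

/-- Exponent vector of the letterplace monomial `y_1(n+1) y_2(n+2) ⋯` of a word. -/
def wordExpAux {Y : Type*} : ℕ → List Y → ((Y × ℕ+) →₀ ℕ)
  | _, [] => 0
  | n, y :: w => Finsupp.single (y, ⟨n + 1, n.succ_pos⟩) 1 + wordExpAux (n + 1) w

/-- The letterplace monomial `y_1(1) y_2(2) ⋯ y_d(d)` of a word `y_1 y_2 ⋯ y_d`. -/
def wordExp {Y : Type*} (w : FreeMonoid Y) : (Y × ℕ+) →₀ ℕ := wordExpAux 0 (FreeMonoid.toList w)

/-- The letterplace embedding `ι : K⟨Y⟩ → PL K Y` (a `K`-linear map). -/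
def iota {Y : Type*} (f : FA K Y) : PL K Y :=
  Finsupp.sum f.coeff fun w c => MvPolynomial.monomial (wordExp w) c

/-- The set `L` of multilinear elements of `PL K Y`: multihomogeneous elements of `V = Im ι`. -/
def Lset {Y : Type*} : Set (PL K Y) :=
  {f | f ∈ Set.range (iota K (Y := Y)) ∧ ∃ μ, IsMultiHomog K μ f}

/-- A letterplace ideal (`L`-ideal): an ℕ-ideal ℕ-generated by its multilinear elements. -/
def IsLPIdeal {Y : Type*} (J : Ideal (PL K Y)) : Prop :=
  IsNIdeal K J ∧ J = nspan K ((J : Set (PL K Y)) ∩ Lset K)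

/-- The generators `x_i(1)t(2) − t(1)x_i(2)` of `D`. -/
def Dgens (X : Type*) : Set (PL K (Option X)) :=
  {g | ∃ x : X,
    g = MvPolynomial.X ((some x : Option X), (1 : ℕ+)) *
          MvPolynomial.X ((none : Option X), (2 : ℕ+)) -
        MvPolynomial.X ((none : Option X), (1 : ℕ+)) *
          MvPolynomial.X ((some x : Option X), (2 : ℕ+))}

/-- The generators `ῑ([t, x_i]) = t(1)x_i(2) − x_i(1)t(2)` of `D`. -/
def DgensT (X : Type*) : Set (PL K (Option X)) :=
  {g | ∃ x : X,
    g = MvPolynomial.X ((none : Option X), (1 : ℕ+)) *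
          MvPolynomial.X ((some x : Option X), (2 : ℕ+)) -
        MvPolynomial.X ((some x : Option X), (1 : ℕ+)) *
          MvPolynomial.X ((none : Option X), (2 : ℕ+))}

/-- `D ⊆ P̄`: the letterplace analogue of `C`. -/
def Did (X : Type*) : Ideal (PL K (Option X)) := nspan K (Dgens K X)

/-- The product `∏_{d < k ≤ d'} t(k)`. -/
def tProd (X : Type*) (d d' : ℕ) : PL K (Option X) :=
  ∏ k ∈ Finset.range (d' - d), MvPolynomial.X ((none : Option X), ⟨d + k + 1, Nat.succ_pos _⟩)

/-- The `L`-saturation `Sat_L(J)` of a letterplace ideal `D ⊆ J ⊆ P̄`. -/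
def SatL {X : Type*} (J : Ideal (PL K (Option X))) : Ideal (PL K (Option X)) :=
  nspan K {f | f ∈ Lset K ∧ ∃ d', MvPolynomial.totalDegree f ≤ d' ∧
    tProd K X (MvPolynomial.totalDegree f) d' * f ∈ J}

/-- `J` is `L`-saturated: `t(d+1)·f ∈ J` with `f` multilinear of degree `d` implies `f ∈ J`. -/
def IsLSat {X : Type*} (J : Ideal (PL K (Option X))) : Prop :=
  ∀ f ∈ Lset K (Y := Option X),
    MvPolynomial.X ((none : Option X), ⟨MvPolynomial.totalDegree f + 1, Nat.succ_pos _⟩) * f ∈ J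
      → f ∈ J

/-! ### Monomial orderings -/

/-- The shift action on letterplace monomials. -/
def shiftMon {Y : Type*} (k : ℕ) (m : (Y × ℕ+) →₀ ℕ) : (Y × ℕ+) →₀ ℕ :=
  Finsupp.mapDomain (shiftVar k) m

/-- A monomial ordering of a (possibly infinite) commutative polynomial ring, given as a strict
order relation on exponent vectors: a well-founded strict total order with `1` minimal,
compatible with multiplication of monomials. -/
structure IsMonOrd {σ : Type*} (r : (σ →₀ ℕ) → (σ →₀ ℕ) → Prop) : Prop where
  total : ∀ m n, r m n ∨ m = n ∨ r n m
  irrefl : ∀ m, ¬ r m m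
  trans : ∀ a b c, r a b → r b c → r a c
  wf : WellFounded r
  zero_min : ∀ m, ¬ r m 0
  add_compat : ∀ m n u, r m n → r (u + m) (u + n)

/-- The ordering is compatible with the ℕ-action (an `ℕ`-ordering). -/
def IsNCompat {Y : Type*} (r : ((Y × ℕ+) →₀ ℕ) → ((Y × ℕ+) →₀ ℕ) → Prop) : Prop :=
  ∀ (k : ℕ) m n, r m n → r (shiftMon k m) (shiftMon k n)

/-- The weight of a letterplace monomial: the largest place index occurring in it
(`⊥ = -∞` for the monomial `1`). -/
def wt {Y : Type*} (m : (Y × ℕ+) →₀ ℕ) : WithBot ℕ :=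
  m.support.sup (fun p => ((p.2 : ℕ) : WithBot ℕ))

/-- A weighted ordering: smaller weight implies smaller monomial. -/
def IsWeighted {Y : Type*} (r : ((Y × ℕ+) →₀ ℕ) → ((Y × ℕ+) →₀ ℕ) → Prop) : Prop :=
  ∀ m n, wt m < wt n → r m n

/-- A monomial ordering of the free algebra `K⟨Y⟩`: a well-founded strict total order on words
compatible with two-sided multiplication. -/
structure IsWordOrd {Y : Type*} (r : FreeMonoid Y → FreeMonoid Y → Prop) : Prop where
  total : ∀ m n, r m n ∨ m = n ∨ r n m
  irrefl : ∀ m, ¬ r m m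
  trans : ∀ a b c, r a b → r b c → r a c
  wf : WellFounded r
  mul_compat : ∀ m n u v, r m n → r (u * m * v) (u * n * v)

/-- A word ordering is graded if shorter words are smaller. -/
def IsGradedWordOrd {Y : Type*} (r : FreeMonoid Y → FreeMonoid Y → Prop) : Prop :=
  ∀ m n, FreeMonoid.length m < FreeMonoid.length n → r m n

/-- The word ordering of `K⟨Y⟩` induced by a monomial ordering of `PL K Y` via `ι`. -/
def inducedWordOrd {Y : Type*} (r : ((Y × ℕ+) →₀ ℕ) → ((Y × ℕ+) →₀ ℕ) → Prop)
    (m n : FreeMonoid Y) : Prop := r (wordExp m) (wordExp n)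

/-- The factor of a letterplace monomial at place `j` (a monomial of `P(j) ≅ P(1)`). -/
def fiber {Y : Type*} (m : (Y × ℕ+) →₀ ℕ) (j : ℕ+) : Y →₀ ℕ :=
  Finsupp.comapDomain (fun y => (y, j)) m (fun _ _ _ _ h => congrArg Prod.fst h)

/-- The place `ℕ`-ordering of `PL K Y` induced by a monomial ordering `r1` of `P(1)`:
compare the factors at the highest place where the two monomials differ. -/
def placeExt {Y : Type*} (r1 : (Y →₀ ℕ) → (Y →₀ ℕ) → Prop)
    (m n : (Y × ℕ+) →₀ ℕ) : Prop :=
  ∃ j : ℕ+, r1 (fiber m j) (fiber n j) ∧ ∀ j', j < j' → fiber m j' = fiber n j'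

/-! ### Leading monomials and Gröbner bases -/

/-- `m` is the leading monomial of `f ∈ PL K Y` with respect to the ordering `r`. -/
def IsLM {Y : Type*} (r : ((Y × ℕ+) →₀ ℕ) → ((Y × ℕ+) →₀ ℕ) → Prop)
    (f : PL K Y) (m : (Y × ℕ+) →₀ ℕ) : Prop :=
  m ∈ f.support ∧ ∀ m' ∈ f.support, m' ≠ m → r m' m

/-- `LM(S)`: the ideal generated by the leading monomials of the nonzero elements of `S`. -/
def LMideal {Y : Type*} (r : ((Y × ℕ+) →₀ ℕ) → ((Y × ℕ+) →₀ ℕ) → Prop)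
    (S : Set (PL K Y)) : Ideal (PL K Y) :=
  Ideal.span {p | ∃ f ∈ S, f ≠ 0 ∧ ∃ m, IsLM K r f m ∧ p = MvPolynomial.monomial m (1 : K)}

/-- The ideal generated by `ℕ·lm(G)`. -/
def shLMideal {Y : Type*} (r : ((Y × ℕ+) →₀ ℕ) → ((Y × ℕ+) →₀ ℕ) → Prop)
    (G : Set (PL K Y)) : Ideal (PL K Y) :=
  Ideal.span {p | ∃ g ∈ G, g ≠ 0 ∧ ∃ m, IsLM K r g m ∧
    ∃ k : ℕ, p = MvPolynomial.monomial (shiftMon k m) (1 : K)}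

/-- `G ⊆ I` is a Gröbner `ℕ`-basis of the ℕ-ideal `I`: `ℕ·lm(G)` generates `LM(I)`. -/
def IsGroebnerNB {Y : Type*} (r : ((Y × ℕ+) →₀ ℕ) → ((Y × ℕ+) →₀ ℕ) → Prop)
    (I : Ideal (PL K Y)) (G : Set (PL K Y)) : Prop :=
  G ⊆ (I : Set (PL K Y)) ∧ shLMideal K r G = LMideal K r (I : Set (PL K Y))

/-- `G` is a Gröbner `L`-basis of the letterplace ideal `J`: `G ⊆ J ∩ L` and the leading monomial
of every nonzero multilinear element of `J` is divisible by a shift of some `lm(g)`, `g ∈ G`. -/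
def IsGroebnerLB {Y : Type*} (r : ((Y × ℕ+) →₀ ℕ) → ((Y × ℕ+) →₀ ℕ) → Prop)
    (J : Ideal (PL K Y)) (G : Set (PL K Y)) : Prop :=
  G ⊆ (J : Set (PL K Y)) ∩ Lset K ∧
  ∀ f ∈ (J : Set (PL K Y)) ∩ Lset K, f ≠ 0 →
    ∃ g ∈ G, ∃ (k : ℕ) (mg mf : (Y × ℕ+) →₀ ℕ),
      IsLM K r g mg ∧ IsLM K r f mf ∧ shiftMon k mg ≤ mf

/-- `w` is the leading monomial (word) of `f ∈ K⟨Y⟩` with respect to the word ordering `r'`. -/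
def IsLMF {Y : Type*} (r' : FreeMonoid Y → FreeMonoid Y → Prop)
    (f : FA K Y) (w : FreeMonoid Y) : Prop :=
  w ∈ f.coeff.support ∧ ∀ w' ∈ f.coeff.support, w' ≠ w → r' w' w

/-- `G ⊆ I` is a Gröbner basis of the two-sided ideal `I ⊆ K⟨Y⟩`: the leading word of every
nonzero `f ∈ I` has the form `u · lm(g) · v` for some nonzero `g ∈ G`. -/
def IsGroebnerBF {Y : Type*} (r' : FreeMonoid Y → FreeMonoid Y → Prop)
    (I : TwoSidedIdeal (FA K Y)) (G : Set (FA K Y)) : Prop :=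
  G ⊆ (I : Set (FA K Y)) ∧
  ∀ f ∈ I, f ≠ 0 → ∃ g ∈ G, g ≠ 0 ∧ ∃ (u v wf wg : FreeMonoid Y),
    IsLMF K r' f wf ∧ IsLMF K r' g wg ∧ wf = u * wg * v

/-! ### Normal forms -/

/-- The generators `x_i(1) x_j(1)` of `N`. -/
def Ngens (Y : Type*) : Set (PL K Y) :=
  {g | ∃ i j : Y, g = MvPolynomial.X (i, (1 : ℕ+)) * MvPolynomial.X (j, (1 : ℕ+))}

/-- A polynomial is in normal form modulo `N` iff in each of its monomials all place indices
are pairwise distinct. -/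
def NormalModN {Y : Type*} (f : PL K Y) : Prop :=
  ∀ m ∈ f.support, ∀ k : ℕ+, placeDeg m k ≤ 1

/-- A polynomial is in normal form modulo `D` iff none of its monomials is divisible by a shift
of the leading monomial of some generator `t(1)x_i(2) − x_i(1)t(2)` of `D`. -/
def NormalModD {X : Type*} (r : (((Option X) × ℕ+) →₀ ℕ) → (((Option X) × ℕ+) →₀ ℕ) → Prop)
    (f : PL K (Option X)) : Prop :=
  ∀ m ∈ f.support, ∀ g ∈ DgensT K X, ∀ mg, IsLM K r g mg → ∀ k : ℕ, ¬ shiftMon k mg ≤ m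

/-- `G` is a Gröbner `L`-basis of `J` modulo `D`: its elements are multilinear elements of `J`
in normal form modulo `D`, and together with the generators of `D` they form a
Gröbner `L`-basis of `J`. -/
def IsGroebnerLBmodD {X : Type*}
    (r : (((Option X) × ℕ+) →₀ ℕ) → (((Option X) × ℕ+) →₀ ℕ) → Prop)
    (J : Ideal (PL K (Option X))) (G : Set (PL K (Option X))) : Prop :=
  (∀ g ∈ G, g ∈ (J : Set (PL K (Option X))) ∩ Lset K ∧ NormalModD K r g) ∧
  IsGroebnerLB K r J (G ∪ DgensT K X)

/-- The commutators `[t, x_i] = t x_i − x_i t` in `F̄`. -/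
def commGens (X : Type*) : Set (FA K (Option X)) :=
  {h | ∃ x : X, h = tv K * gen K (some x) - gen K (some x) * tv K}

/-- A polynomial of `F̄` is in normal form modulo `C` iff none of its words contains the leading
word of some commutator `[t, x_i]` as a factor. -/
def NormalModC {X : Type*} (r' : FreeMonoid (Option X) → FreeMonoid (Option X) → Prop)
    (f : FA K (Option X)) : Prop :=
  ∀ w ∈ f.coeff.support, ∀ g ∈ commGens K X, ∀ wg, IsLMF K r' g wg →
    ¬ ∃ u v, w = u * wg * v

/-! ### Concrete orderings on words -/

/-- The order on the letters of `X ∪ {t}` (with `X = ℕ`): `t ≺ x_1 ≺ x_2 ≺ ⋯`. -/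
def optLt : Option ℕ → Option ℕ → Prop
  | none, some _ => True
  | some i, some j => i < j
  | _, none => False

/-- The graded right lexicographic ordering on words: first compare lengths, then compare
letter by letter from the right. -/
def grRightLex {Y : Type*} (lt : Y → Y → Prop) (dflt : Y) (m n : FreeMonoid Y) : Prop :=
  FreeMonoid.length m < FreeMonoid.length n ∨
  (FreeMonoid.length m = FreeMonoid.length n ∧
    ∃ t < FreeMonoid.length m,
      lt ((FreeMonoid.toList m).getD t dflt) ((FreeMonoid.toList n).getD t dflt) ∧
      ∀ s, t < s → (FreeMonoid.toList m).getD s dflt = (FreeMonoid.toList n).getD s dflt)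

end

/-!
The letterplace embedding `ι` has a linear left inverse `ρ` reading off the coefficients of word
monomials, and `ρ` maps `J = ⟨ι(I)⟩_ℕ` into `I`: a monomial times a shift of `ι(g)`, with `g`
homogeneous, either has no word monomial among its terms or equals `ι(u g v)`, because all words
of `g` have the same length and so sit in the same frame `u _ v`. Hence `ι(f) ∈ J` forces
`f ∈ I`, and `L`-saturation of `J` reduces to `h t ∈ I ⟹ h ∈ I` for homogeneous `h`, which is
where saturation of `I` enters: `h − φ(h)^* t^j ∈ C`. That `J` is a letterplace ideal comes from
the grading of `I`, and `D ⊆ J` from `[x_i, t] ∈ C`.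
-/

section FreeAlgebra

open MonoidAlgebra

variable {K : Type*} [Field K] {Y Z : Type*}

lemma IsHomog.sub {d : ℕ} {a b : FA K Y} (ha : IsHomog K d a) (hb : IsHomog K d b) :
    IsHomog K d (a - b) := by
  classical
  intro w hw
  rcases Finset.mem_union.mp (Finsupp.support_sub hw) with h | h
  exacts [ha w h, hb w h]

lemma IsHomog.mul {d e : ℕ} {a b : FA K Y} (ha : IsHomog K d a) (hb : IsHomog K e b) :
    IsHomog K (d + e) (a * b) := by
  classical
  intro w hw
  obtain ⟨u, hu, v, hv, rfl⟩ := Finset.mem_mul.mp (support_coeff_mul_subset a b hw)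
  rw [FreeMonoid.length_mul, ha u hu, hb v hv]

lemma isHomog_single (w : FreeMonoid Y) (c : K) : IsHomog K w.length (single w c) := by
  intro w' hw'
  rw [Finset.mem_singleton.mp (Finsupp.support_single_subset hw')]

lemma isHomog_sum {ι : Type*} (s : Finset ι) (f : ι → FA K Y) {d : ℕ}
    (h : ∀ i ∈ s, IsHomog K d (f i)) : IsHomog K d (∑ i ∈ s, f i) := by
  classical
  intro w hw
  rw [coeff_sum] at hw
  obtain ⟨i, hi, hw⟩ := Finsupp.mem_support_finsetSum w hw
  exact h i hi w hw

lemma isHomog_homComp (d : ℕ) (g : FA K Y) : IsHomog K d (homComp K d g) :=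
  isHomog_sum _ _ fun w hw => (Finset.mem_filter.mp hw).2 ▸ isHomog_single w _

lemma length_le_degF {g : FA K Y} {w : FreeMonoid Y} (hw : w ∈ g.coeff.support) :
    w.length ≤ degF K g :=
  Finset.le_sup (f := FreeMonoid.length) hw

lemma sum_homComp (g : FA K Y) : ∑ d ∈ Finset.range (degF K g + 1), homComp K d g = g := by
  classical
  unfold homComp
  rw [Finset.sum_fiberwise_of_maps_to fun w hw => Finset.mem_range_succ_iff.mpr (length_le_degF hw)]
  exact sum_coeff_single g

lemma isHomog_tv_pow (n : ℕ) : IsHomog K n (tv K (X := Z) ^ n) := by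
  induction n with
  | zero => simpa [one_def] using isHomog_single (K := K) (1 : FreeMonoid (Option Z)) 1
  | succ n ih => rw [pow_succ]; exact ih.mul (isHomog_single _ _)

lemma hstarO_eq_sum (g : FA K (Option Z)) :
    hstarO K g = ∑ w ∈ g.coeff.support, single w (g.coeff w) * tv K ^ (degF K g - w.length) := by
  unfold hstarO
  refine Finset.sum_congr rfl fun w _ => ?_
  rw [tv, gen, of_apply, single_pow, single_mul_single, one_pow, mul_one]

lemma isHomog_hstarO (g : FA K (Option Z)) : IsHomog K (degF K g) (hstarO K g) := by
  rw [hstarO_eq_sum]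
  refine isHomog_sum _ _ fun w hw => ?_
  have := (isHomog_single w (g.coeff w)).mul
    (isHomog_tv_pow (K := K) (Z := Z) (degF K g - w.length))
  rwa [Nat.add_sub_cancel' (length_le_degF hw)] at this

def eraseT : FreeMonoid (Option Z) →* FreeMonoid (Option Z) :=
  FreeMonoid.lift fun o => o.elim 1 fun x => FreeMonoid.of (some x)

lemma length_eraseT_le (w : FreeMonoid (Option Z)) : (eraseT w).length ≤ w.length := by
  induction w using FreeMonoid.inductionOn' with
  | one => simp
  | of_mul o w ih =>
    rw [map_mul, FreeMonoid.length_mul, FreeMonoid.length_mul, FreeMonoid.length_of]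
    have : (eraseT (FreeMonoid.of o)).length ≤ 1 := by cases o <;> simp [eraseT]
    omega

lemma phi_single (w : FreeMonoid (Option Z)) (c : K) :
    phi K (single w c) = single (eraseT w) c := by
  have hF : (FreeMonoid.lift fun o : Option Z => Option.elim o 1 fun x => gen K (some x)) =
      (of K (FreeMonoid (Option Z))).comp eraseT :=
    FreeMonoid.hom_eq fun o => by cases o <;> simp [eraseT, gen, one_def]
  rw [phi, lift_single, hF, MonoidHom.comp_apply, of_apply, smul_single', mul_one]

lemma phi_apply (g : FA K (Option Z)) : phi K g = mapDomain eraseT g := by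
  induction g using induction_linear with
  | zero => simp
  | add a b ha hb => rw [map_add, ha, hb, mapDomain_add]
  | single w c => rw [phi_single, mapDomain_single]

lemma degF_phi_le {d : ℕ} {h : FA K (Option Z)} (hh : IsHomog K d h) : degF K (phi K h) ≤ d := by
  classical
  refine Finset.sup_le fun w hw => ?_
  rw [phi_apply, coeff_mapDomain] at hw
  obtain ⟨w', hw', rfl⟩ := Finset.mem_image.mp (Finsupp.mapDomain_support hw)
  exact (length_eraseT_le w').trans (hh w' hw').le

lemma phi_tv : phi K (tv K (X := Z)) = 1 := by
  rw [tv, gen, of_apply, phi_single]; rfl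

lemma phi_phi (g : FA K (Option Z)) : phi K (phi K g) = phi K g := by
  suffices (phi K).comp (phi K) = phi K (X := Z) from congr($this g)
  refine algHom_ext' (FreeMonoid.hom_eq fun o => ?_) (Subsingleton.elim _ _)
  cases o <;> simp [phi, gen]

lemma phi_hstarO (g : FA K (Option Z)) : phi K (hstarO K g) = phi K g := by
  conv_rhs => rw [← sum_coeff_single g, Finsupp.sum]
  simp only [hstarO_eq_sum, map_sum, map_mul, map_pow, phi_tv, one_pow, mul_one]

lemma phi_eq_zero_of_mem_Cideal {g : FA K (Option Z)} (hg : g ∈ Cideal K) : phi K g = 0 :=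
  TwoSidedIdeal.mem_span_iff.mp hg (TwoSidedIdeal.ker (phi K))
    (fun _ hs => (TwoSidedIdeal.mem_ker (phi K)).mpr hs.2)

lemma sub_hstarO_phi_mul_tv_pow_mem_Cideal {d : ℕ} {h : FA K (Option Z)} (hh : IsHomog K d h) :
    h - hstarO K (phi K h) * tv K ^ (d - degF K (phi K h)) ∈ Cideal K := by
  refine TwoSidedIdeal.subset_span ⟨⟨d, hh.sub ?_⟩, ?_⟩
  · have := (isHomog_hstarO (phi K h)).mul (isHomog_tv_pow (K := K) (d - degF K (phi K h)))
    rwa [Nat.add_sub_cancel' (degF_phi_le hh)] at this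
  · rw [map_sub, map_mul, map_pow, phi_tv, one_pow, mul_one, phi_hstarO, phi_phi, sub_self]

/-- Unless `h ∈ C`, saturation gives `φ(h t)^* = φ(h)^* ∈ I`, and `h ≡ φ(h)^* t^j` modulo `C`. -/
lemma mem_of_mul_tv_mem {I : TwoSidedIdeal (FA K (Option Z))} (hC : Cideal K ≤ I)
    (hSat : ∀ f ∈ I, (∃ d, IsHomog K d f) → f ∉ Cideal K → hstarO K (phi K f) ∈ I)
    {d : ℕ} {h : FA K (Option Z)} (hh : IsHomog K d h) (hht : h * tv K ∈ I) : h ∈ I := by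
  have hphi : phi K (h * tv K) = phi K h := by rw [map_mul, phi_tv, mul_one]
  by_cases h0 : phi K h = 0
  · exact hC (TwoSidedIdeal.subset_span ⟨⟨d, hh⟩, h0⟩)
  have hnotC : h * tv K ∉ Cideal K := fun hc => h0 (hphi ▸ phi_eq_zero_of_mem_Cideal hc)
  have hstar : hstarO K (phi K h) ∈ I :=
    hphi ▸ hSat _ hht ⟨d + 1, hh.mul (by simpa using isHomog_tv_pow (K := K) (Z := Z) 1)⟩ hnotC
  simpa using I.add_mem (hC (sub_hstarO_phi_mul_tv_pow_mem_Cideal hh))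
    (I.mul_mem_right _ (tv K ^ (d - degF K (phi K h))) hstar)

end FreeAlgebra

section WordExp

variable {Y : Type*}

lemma wordExpAux_append (n : ℕ) (l₁ l₂ : List Y) :
    wordExpAux n (l₁ ++ l₂) = wordExpAux n l₁ + wordExpAux (n + l₁.length) l₂ := by
  induction l₁ generalizing n with
  | nil => simp [wordExpAux]
  | cons y l ih =>
    simp only [List.cons_append, wordExpAux, ih, List.length_cons, add_assoc, Nat.add_comm 1]

lemma wordExpAux_apply_of_le {n : ℕ} (l : List Y) (y : Y) {p : ℕ+} (hp : (p : ℕ) ≤ n) :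
    wordExpAux n l (y, p) = 0 := by
  induction l generalizing n with
  | nil => rfl
  | cons z l ih =>
    rw [wordExpAux, Finsupp.add_apply, ih (by omega), Finsupp.single_eq_of_ne]
    intro he
    have : (p : ℕ) = n + 1 := congrArg (fun q : Y × ℕ+ => (q.2 : ℕ)) he
    omega

lemma wordExpAux_apply_of_eq_add [DecidableEq Y] {n i : ℕ} (l : List Y) (y : Y) {p : ℕ+}
    (hp : (p : ℕ) = n + i + 1) : wordExpAux n l (y, p) = if l[i]? = some y then 1 else 0 := by
  induction l generalizing n i with
  | nil => rfl
  | cons z l ih =>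
    rw [wordExpAux, Finsupp.add_apply]
    rcases i with _ | i
    · rw [wordExpAux_apply_of_le l y (by omega : (p : ℕ) ≤ n + 1), add_zero, Finsupp.single_apply,
        List.getElem?_cons_zero]
      refine if_congr ⟨fun he => ?_, fun he => ?_⟩ rfl rfl
      · exact congrArg (some ∘ Prod.fst) he
      · exact Prod.ext (Option.some_inj.mp he) (PNat.eq hp.symm)
    · rw [ih (n := n + 1) (i := i) (by omega), Finsupp.single_eq_of_ne, zero_add,
        List.getElem?_cons_succ]
      intro he
      have : (p : ℕ) = n + 1 := congrArg (fun q : Y × ℕ+ => (q.2 : ℕ)) he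
      omega

lemma wordExpAux_injective (n : ℕ) : Function.Injective (wordExpAux (Y := Y) n) := by
  classical
  intro l l' h
  refine List.ext_getElem? fun i => Option.ext fun y => ?_
  obtain ⟨p, hp⟩ : ∃ p : ℕ+, (p : ℕ) = n + i + 1 := ⟨⟨n + i + 1, Nat.succ_pos _⟩, rfl⟩
  have := congr($h (y, p))
  rw [wordExpAux_apply_of_eq_add l y hp, wordExpAux_apply_of_eq_add l' y hp] at this
  split_ifs at this <;> simp_all

lemma wordExp_injective : Function.Injective (wordExp (Y := Y)) :=
  (wordExpAux_injective 0).comp FreeMonoid.toList.injective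

/-- The word is `u w₀ v` with `m = ι(u) · ((k + |w₀|)·ι(v))`. -/
lemma exists_frame_of_add_wordExpAux_eq {m : (Y × ℕ+) →₀ ℕ} {k : ℕ} {w₀ w' : List Y}
    (h : m + wordExpAux k w₀ = wordExpAux 0 w') :
    ∃ u v : List Y, ∀ w : List Y, w.length = w₀.length →
      m + wordExpAux k w = wordExpAux 0 (u ++ w ++ v) := by
  classical
  rcases eq_or_ne w₀ [] with rfl | hne
  · refine ⟨w', [], fun w hw => ?_⟩
    simpa [List.length_eq_zero_iff.mp hw, wordExpAux] using h
  have hpre : w₀ <+: w'.drop k := List.prefix_iff_getElem?.mpr fun i hi => by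
    obtain ⟨p, hp⟩ : ∃ p : ℕ+, (p : ℕ) = k + i + 1 := ⟨⟨k + i + 1, Nat.succ_pos _⟩, rfl⟩
    have := congr($h (w₀[i], p))
    rw [Finsupp.add_apply, wordExpAux_apply_of_eq_add w₀ _ hp,
      wordExpAux_apply_of_eq_add (n := 0) (i := k + i) w' _ (by omega),
      if_pos (List.getElem?_eq_getElem hi)] at this
    rw [List.getElem?_drop]
    split_ifs at this with hw'
    exact hw'
  obtain ⟨v, hv⟩ := hpre
  have hk : (w'.take k).length = k := by
    have := congrArg List.length hv
    simp only [List.length_append, List.length_drop] at this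
    have := List.length_pos_iff.mpr hne
    simp only [List.length_take]
    omega
  have hm : m = wordExpAux 0 (w'.take k) + wordExpAux (k + w₀.length) v := by
    rw [← List.take_append_drop k w', ← hv, ← List.append_assoc, wordExpAux_append,
      wordExpAux_append, List.length_append, hk, zero_add, zero_add] at h
    exact add_right_cancel (h.trans (add_right_comm _ _ _))
  refine ⟨w'.take k, v, fun w hw => ?_⟩
  rw [hm, wordExpAux_append, wordExpAux_append, List.length_append, hk, hw, zero_add, zero_add,
    add_right_comm]

lemma shiftMon_wordExpAux (k n : ℕ) (l : List Y) :
    shiftMon k (wordExpAux n l) = wordExpAux (n + k) l := by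
  induction l generalizing n with
  | nil => simp [wordExpAux, shiftMon]
  | cons y l ih =>
    rw [wordExpAux, shiftMon, Finsupp.mapDomain_add, Finsupp.mapDomain_single, ← shiftMon, ih,
      wordExpAux, Nat.add_right_comm]
    congr
    exact Prod.ext rfl (PNat.eq (show n + 1 + k = n + k + 1 by omega))

lemma sum_wordExpAux (n : ℕ) (l : List Y) : (wordExpAux n l).sum (fun _ e => e) = l.length := by
  induction l generalizing n with
  | nil => simp [wordExpAux]
  | cons y l ih =>
    rw [wordExpAux, Finsupp.sum_add_index' (fun _ => rfl) (fun _ _ _ => rfl),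
      Finsupp.sum_single_index rfl, ih, List.length_cons, add_comm]

lemma placeDeg_wordExpAux_eq_of_length_eq (n : ℕ) {l l' : List Y} (h : l.length = l'.length) :
    placeDeg (wordExpAux n l) = placeDeg (wordExpAux n l') := by
  induction l generalizing l' n with
  | nil => rw [List.eq_nil_of_length_eq_zero h.symm]
  | cons y l ih =>
    cases l' with
    | nil => simp at h
    | cons y' l' =>
      simp only [wordExpAux, placeDeg, Finsupp.mapDomain_add, Finsupp.mapDomain_single]
      rw [← placeDeg, ← placeDeg, ih (n + 1) (by simpa using h)]

end WordExp

noncomputable section Iota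

open MonoidAlgebra

variable (K : Type*) [Field K] (Y : Type*)

def iotaL : FA K Y →ₗ[K] PL K Y :=
  Finsupp.lsum K (fun w => MvPolynomial.monomial (wordExp w)) ∘ₗ
    (MonoidAlgebra.coeffLinearEquiv K).toLinearMap

/-- The left inverse of `ι`: keeps the coefficients of word monomials, drops the rest. -/
def rho : PL K Y →ₗ[K] FA K Y :=
  (MonoidAlgebra.coeffLinearEquiv K).symm.toLinearMap ∘ₗ
    Finsupp.lcomapDomain wordExp wordExp_injective ∘ₗ
    (AddMonoidAlgebra.coeffLinearEquiv K).toLinearMap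

variable {K Y}

lemma iota_eq_iotaL (f : FA K Y) : iota K f = iotaL K Y f := rfl

lemma iota_single (w : FreeMonoid Y) (c : K) :
    iota K (single w c) = MvPolynomial.monomial (wordExp w) c := by
  simp [iota_eq_iotaL, iotaL]

lemma coeff_rho (p : PL K Y) (w : FreeMonoid Y) :
    (rho K Y p).coeff w = MvPolynomial.coeff (wordExp w) p := rfl

lemma coeff_iota (f : FA K Y) (w : FreeMonoid Y) :
    MvPolynomial.coeff (wordExp w) (iota K f) = f.coeff w := by
  induction f using induction_linear with
  | zero => simp [iota_eq_iotaL]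
  | add a b ha hb => simp_all [iota_eq_iotaL]
  | single w' c =>
    classical
    simp [iota_single, MvPolynomial.coeff_monomial, Finsupp.single_apply,
      wordExp_injective.eq_iff]

lemma coeff_iota_eq_zero {m : (Y × ℕ+) →₀ ℕ} (hm : m ∉ Set.range wordExp) (f : FA K Y) :
    MvPolynomial.coeff m (iota K f) = 0 := by
  classical
  induction f using induction_linear with
  | zero => simp [iota_eq_iotaL]
  | add a b ha hb => simp_all [iota_eq_iotaL]
  | single w c => rw [iota_single, MvPolynomial.coeff_monomial, if_neg fun h => hm ⟨w, h⟩]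

lemma rho_iota (f : FA K Y) : rho K Y (iota K f) = f := by
  ext w
  rw [coeff_rho, coeff_iota]

lemma rho_monomial_wordExp (w : FreeMonoid Y) (c : K) :
    rho K Y (MvPolynomial.monomial (wordExp w) c) = single w c := by
  rw [← iota_single, rho_iota]

lemma rho_monomial_eq_zero {a : (Y × ℕ+) →₀ ℕ} (ha : a ∉ Set.range wordExp) (c : K) :
    rho K Y (MvPolynomial.monomial a c) = 0 := by
  classical
  ext w
  rw [coeff_rho, MvPolynomial.coeff_monomial, if_neg (fun h => ha ⟨w, h.symm⟩)]
  rfl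

lemma mem_support_iota {f : FA K Y} {m : (Y × ℕ+) →₀ ℕ} :
    m ∈ (iota K f).support ↔ ∃ w ∈ f.coeff.support, wordExp w = m := by
  rw [MvPolynomial.mem_support_iff]
  constructor
  · intro hm
    by_cases hr : m ∈ Set.range wordExp
    · obtain ⟨w, rfl⟩ := hr
      exact ⟨w, Finsupp.mem_support_iff.mpr (by rwa [coeff_iota] at hm), rfl⟩
    · exact absurd (coeff_iota_eq_zero hr f) hm
  · rintro ⟨w, hw, rfl⟩
    rw [coeff_iota]
    exact Finsupp.mem_support_iff.mp hw

lemma sum_placeDeg (m : (Y × ℕ+) →₀ ℕ) :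
    (placeDeg m).sum (fun _ e => e) = m.sum (fun _ e => e) :=
  Finsupp.sum_mapDomain_index (fun _ => rfl) (fun _ _ _ => rfl)

lemma sum_wordExp (w : FreeMonoid Y) : (wordExp w).sum (fun _ e => e) = w.length :=
  sum_wordExpAux 0 w.toList

lemma isMultiHomog_iota {d : ℕ} {g : FA K Y} (hg : IsHomog K d g) :
    ∃ μ, IsMultiHomog K μ (iota K g) := by
  by_cases h : ∃ w₀, w₀ ∈ g.coeff.support
  · obtain ⟨w₀, hw₀⟩ := h
    refine ⟨placeDeg (wordExp w₀), fun m hm => ?_⟩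
    obtain ⟨w, hw, rfl⟩ := mem_support_iota.mp hm
    exact placeDeg_wordExpAux_eq_of_length_eq 0 ((hg w hw).trans (hg w₀ hw₀).symm)
  · exact ⟨0, fun m hm => absurd (mem_support_iota.mp hm) fun ⟨w, hw, _⟩ => h ⟨w, hw⟩⟩

lemma totalDegree_eq_of_isMultiHomog {μ : ℕ+ →₀ ℕ} {p : PL K Y} (hp : IsMultiHomog K μ p)
    {m : (Y × ℕ+) →₀ ℕ} (hm : m ∈ p.support) : p.totalDegree = μ.sum (fun _ e => e) := by
  refine le_antisymm (Finset.sup_le fun m' hm' => ?_) ?_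
  · rw [← hp m' hm', sum_placeDeg]
  · rw [← hp m hm, sum_placeDeg]
    exact Finset.le_sup (f := fun s => s.sum fun _ e => e) hm

lemma isHomog_totalDegree_of_isMultiHomog_iota {μ : ℕ+ →₀ ℕ} {f : FA K Y}
    (hf : IsMultiHomog K μ (iota K f)) : IsHomog K (iota K f).totalDegree f := by
  intro w hw
  have hm := mem_support_iota.mpr ⟨w, hw, rfl⟩
  rw [totalDegree_eq_of_isMultiHomog hf hm, ← hf _ hm, sum_placeDeg, sum_wordExp]

lemma wordExp_mul_of (w : FreeMonoid Y) (y : Y) :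
    wordExp (w * FreeMonoid.of y) =
      wordExp w + Finsupp.single (y, ⟨w.length + 1, Nat.succ_pos _⟩) 1 := by
  rw [wordExp, FreeMonoid.toList_mul, wordExpAux_append, zero_add, FreeMonoid.toList_of,
    wordExpAux, wordExpAux, add_zero]
  rfl

lemma iota_mul_tv {Z : Type*} {d : ℕ} {h : FA K (Option Z)} (hh : IsHomog K d h) :
    iota K (h * tv K) = MvPolynomial.X (none, ⟨d + 1, Nat.succ_pos d⟩) * iota K h := by
  conv_lhs => rw [← sum_coeff_single h, Finsupp.sum, Finset.sum_mul, iota_eq_iotaL, map_sum]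
  rw [iota, Finsupp.sum, Finset.mul_sum]
  refine Finset.sum_congr rfl fun w hw => ?_
  rw [tv, gen, of_apply, single_mul_single, mul_one, ← iota_eq_iotaL, iota_single,
    wordExp_mul_of, hh w hw, MvPolynomial.X, MvPolynomial.monomial_mul, one_mul, add_comm]

lemma iota_gen_mul_gen (y y' : Y) :
    iota K (gen K y * gen K y') = MvPolynomial.X (y, 1) * MvPolynomial.X (y', 2) := by
  rw [gen, gen, of_apply, of_apply, single_mul_single, one_mul, iota_single, MvPolynomial.X,
    MvPolynomial.X, MvPolynomial.monomial_mul, one_mul]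
  congr 1
  simp [wordExp, wordExpAux]

end Iota

section NIdeal

variable {K : Type*} [Field K] {Y : Type*}

lemma shift_zero (p : PL K Y) : shift K 0 p = p := by
  have : shiftVar (Y := Y) 0 = id := funext fun _ => rfl
  rw [shift, this, MvPolynomial.rename_id_apply]

lemma shift_shift (k k' : ℕ) (p : PL K Y) : shift K k (shift K k' p) = shift K (k' + k) p := by
  have : shiftVar (Y := Y) k ∘ shiftVar k' = shiftVar (k' + k) :=
    funext fun q => Prod.ext rfl (PNat.eq (show (q.2 : ℕ) + k' + k = q.2 + (k' + k) by omega))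
  rw [shift, shift, shift, MvPolynomial.rename_rename, this]

lemma shift_monomial (k : ℕ) (e : (Y × ℕ+) →₀ ℕ) (c : K) :
    shift K k (MvPolynomial.monomial e c : PL K Y) = MvPolynomial.monomial (shiftMon k e) c :=
  MvPolynomial.rename_monomial _ _ _

lemma shift_mem_nspan {S : Set (PL K Y)} {f : PL K Y} (hf : f ∈ S) (k : ℕ) :
    shift K k f ∈ nspan K S :=
  Ideal.subset_span ⟨k, f, hf, rfl⟩

lemma subset_nspan {S : Set (PL K Y)} : S ⊆ nspan K S :=
  fun f hf => shift_zero f ▸ shift_mem_nspan hf 0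

lemma nspan_mono {S T : Set (PL K Y)} (h : S ⊆ T) : nspan K S ≤ nspan K T :=
  Ideal.span_mono fun _ ⟨k, f, hf, he⟩ => ⟨k, f, h hf, he⟩

lemma isNIdeal_nspan (S : Set (PL K Y)) : IsNIdeal K (nspan K S) := by
  intro k f hf
  have h1 : shift K k f ∈ Ideal.map (shift K k) (nspan K S) := Ideal.mem_map_of_mem _ hf
  rw [nspan, Ideal.map_span] at h1
  refine Ideal.span_le.mpr ?_ h1
  rintro - ⟨-, ⟨k', f', hf', rfl⟩, rfl⟩
  rw [shift_shift]
  exact shift_mem_nspan hf' _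

lemma nspan_le {S : Set (PL K Y)} {J : Ideal (PL K Y)} (hJ : IsNIdeal K J) (hS : S ⊆ J) :
    nspan K S ≤ J :=
  Ideal.span_le.mpr fun _ ⟨k, f, hf, he⟩ => he ▸ hJ k f (hS hf)

lemma monomial_mul_shift_iota (m : (Y × ℕ+) →₀ ℕ) (c : K) (k : ℕ) (g : FA K Y) :
    MvPolynomial.monomial m c * shift K k (iota K g) =
      g.coeff.sum fun w c' => MvPolynomial.monomial (m + wordExpAux k w.toList) (c * c') := by
  rw [iota, map_finsuppSum, Finsupp.mul_sum]
  refine Finsupp.sum_congr fun w _ => ?_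
  rw [shift_monomial, wordExp, shiftMon_wordExpAux, zero_add, MvPolynomial.monomial_mul]

end NIdeal

section Reflection

open MonoidAlgebra

variable {K : Type*} [Field K] {Y : Type*} {I : TwoSidedIdeal (FA K Y)}

lemma rho_monomial_mul_shift_iota_mem_of_isHomog {g : FA K Y} (hg : g ∈ I) {d : ℕ}
    (hd : IsHomog K d g) (m : (Y × ℕ+) →₀ ℕ) (c : K) (k : ℕ) :
    rho K Y (MvPolynomial.monomial m c * shift K k (iota K g)) ∈ I := by
  rw [monomial_mul_shift_iota, map_finsuppSum]
  by_cases hex : ∃ w₀ w' : List Y, w₀.length = d ∧ m + wordExpAux k w₀ = wordExpAux 0 w'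
  · obtain ⟨w₀, w', hlen, heq⟩ := hex
    obtain ⟨u, v, huv⟩ := exists_frame_of_add_wordExpAux_eq heq
    have hframe : ∀ w ∈ g.coeff.support, m + wordExpAux k w.toList =
        wordExp (FreeMonoid.ofList u * w * FreeMonoid.ofList v) := fun w hw => by
      rw [huv w.toList (hlen ▸ hd w hw)]
      rfl
    have hsum : (g.coeff.sum fun w c' =>
        rho K Y (MvPolynomial.monomial (m + wordExpAux k w.toList) (c * c'))) =
        single (FreeMonoid.ofList u) c * g * single (FreeMonoid.ofList v) 1 := by
      conv_rhs => rw [← sum_coeff_single g, Finsupp.sum, Finset.mul_sum, Finset.sum_mul]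
      refine Finset.sum_congr rfl fun w hw => ?_
      dsimp only
      rw [hframe w hw, rho_monomial_wordExp, single_mul_single, single_mul_single, mul_one]
    rw [hsum]
    exact I.mul_mem_right _ _ (I.mul_mem_left _ _ hg)
  · convert zero_mem I
    refine Finset.sum_eq_zero fun w hw => rho_monomial_eq_zero ?_ _
    rintro ⟨w', hw'⟩
    exact hex ⟨w.toList, w'.toList, hd w hw, hw'.symm⟩

lemma rho_monomial_mul_shift_iota_mem (hI : IsGradedF K I) {g : FA K Y} (hg : g ∈ I)
    (m : (Y × ℕ+) →₀ ℕ) (c : K) (k : ℕ) :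
    rho K Y (MvPolynomial.monomial m c * shift K k (iota K g)) ∈ I := by
  rw [← sum_homComp g, iota_eq_iotaL, map_sum, map_sum, Finset.mul_sum, map_sum]
  exact sum_mem fun d _ =>
    rho_monomial_mul_shift_iota_mem_of_isHomog (hI g hg d) (isHomog_homComp d g) m c k

/-- Induction on the span, for all monomial multiples at once, since `ρ` is only linear. -/
lemma rho_mem_of_mem_nspan_iota (hI : IsGradedF K I) {p : PL K Y}
    (hp : p ∈ nspan K (iota K '' (I : Set (FA K Y)))) : rho K Y p ∈ I := by
  suffices ∀ m c, rho K Y (MvPolynomial.monomial m c * p) ∈ I by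
    simpa using this 0 1
  induction hp using Submodule.span_induction with
  | mem x hx =>
    obtain ⟨k, f, ⟨g, hg, rfl⟩, rfl⟩ := hx
    exact fun m c => rho_monomial_mul_shift_iota_mem hI hg m c k
  | zero => simp
  | add x y _ _ hx hy => exact fun m c => by rw [mul_add, map_add]; exact add_mem (hx m c) (hy m c)
  | smul r x _ hx =>
    intro m c
    rw [smul_eq_mul, ← mul_assoc, MvPolynomial.as_sum (MvPolynomial.monomial m c * r),
      Finset.sum_mul, map_sum]
    exact sum_mem fun m' _ => hx m' _

lemma mem_of_iota_mem_nspan_iota (hI : IsGradedF K I) {f : FA K Y}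
    (hf : iota K f ∈ nspan K (iota K '' (I : Set (FA K Y)))) : f ∈ I :=
  rho_iota f ▸ rho_mem_of_mem_nspan_iota hI hf

end Reflection

section Main

variable {K : Type*} [Field K]

lemma isLPIdeal_nspan_iota {Y : Type*} {I : TwoSidedIdeal (FA K Y)} (hI : IsGradedF K I) :
    IsLPIdeal K (nspan K (iota K '' (I : Set (FA K Y)))) := by
  refine ⟨isNIdeal_nspan _, le_antisymm ?_ (nspan_le (isNIdeal_nspan _) Set.inter_subset_left)⟩
  refine nspan_le (isNIdeal_nspan _) ?_
  rintro _ ⟨g, hg, rfl⟩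
  rw [← sum_homComp g, iota_eq_iotaL, map_sum]
  exact sum_mem fun d _ => subset_nspan
    ⟨subset_nspan ⟨_, hI g hg d, rfl⟩, ⟨_, rfl⟩, isMultiHomog_iota (isHomog_homComp d g)⟩

lemma commutator_mem_Cideal {X : Type*} (x : X) :
    gen K (some x) * tv K - tv K * gen K (some x) ∈ Cideal K := by
  have hgen (y : Option X) : IsHomog K 1 (gen K y) := isHomog_single (FreeMonoid.of y) 1
  refine TwoSidedIdeal.subset_span ⟨⟨1 + 1, ?_⟩, ?_⟩
  · exact ((hgen _).mul (hgen none)).sub ((hgen none).mul (hgen _))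
  · rw [map_sub, map_mul, map_mul, phi_tv, mul_one, one_mul, sub_self]

lemma did_le_nspan_iota {X : Type*} {I : TwoSidedIdeal (FA K (Option X))}
    (hC : Cideal K ≤ I) : Did K X ≤ nspan K (iota K '' (I : Set (FA K (Option X)))) := by
  refine nspan_mono ?_
  rintro _ ⟨x, rfl⟩
  refine ⟨_, hC (commutator_mem_Cideal x), ?_⟩
  rw [iota_eq_iotaL, map_sub, ← iota_eq_iotaL, ← iota_eq_iotaL, tv, iota_gen_mul_gen,
    iota_gen_mul_gen]

lemma isLSat_nspan_iota {X : Type*} {I : TwoSidedIdeal (FA K (Option X))} (hI : IsGradedF K I)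
    (hC : Cideal K ≤ I)
    (hSat : ∀ f ∈ I, (∃ d, IsHomog K d f) → f ∉ Cideal K → hstarO K (phi K f) ∈ I) :
    IsLSat K (nspan K (iota K '' (I : Set (FA K (Option X))))) := by
  rintro _ ⟨⟨h, rfl⟩, μ, hμ⟩ hXf
  have hd := isHomog_totalDegree_of_isMultiHomog_iota hμ
  rw [← iota_mul_tv hd] at hXf
  exact subset_nspan ⟨h, mem_of_mul_tv_mem hC hSat hd (mem_of_iota_mem_nspan_iota hI hXf), rfl⟩

end Main

theorem statement_8_general (K : Type*) [Field K] (X : Type*)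
    (I : TwoSidedIdeal (FA K (Option X))) (hGr : IsGradedF K I) (hC : Cideal K ≤ I)
    (hSat : ∀ f ∈ I, (∃ d, IsHomog K d f) → f ∉ Cideal K → hstarO K (phi K f) ∈ I)
    (J : Ideal (PL K (Option X)))
    (hJ : J = nspan K (iota K '' (I : Set (FA K (Option X))))) :
    IsLPIdeal K J ∧ Did K X ≤ J ∧ IsLSat K J := by
  subst hJ
  exact ⟨isLPIdeal_nspan_iota hGr, did_le_nspan_iota hC, isLSat_nspan_iota hGr hC hSat⟩

/-- If `C ⊆ I ⊆ F̄` is a saturated graded two-sided ideal (every homogeneous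
`f ∈ I∖C` has `φ(f)^* ∈ I`) and `J = ⟨ῑ(I)⟩_ℕ ⊆ P̄` is its letterplace analogue, then `J` is an
`L`-saturated letterplace ideal containing `D`. -/
theorem statement_8 (K : Type*) [Field K] (X : Type*) [Countable X]
    (I : TwoSidedIdeal (FA K (Option X))) (hGr : IsGradedF K I) (hC : Cideal K ≤ I)
    (hSat : ∀ f ∈ I, (∃ d, IsHomog K d f) → f ∉ Cideal K → hstarO K (phi K f) ∈ I)
    (J : Ideal (PL K (Option X)))
    (hJ : J = nspan K (iota K '' (I : Set (FA K (Option X))))) :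
    IsLPIdeal K J ∧ Did K X ≤ J ∧ IsLSat K J :=
  statement_8_general K X I hGr hC hSat J hJ
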